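/- arXiv:1812.02965 — 5 statements merged into one kernel-verified Lean document; each statement's English description precedes it below -/
import Mathlib

section
/- Let α ∈ ℤ_p be a p-adic integer with standard expansion α = a_0 + a_1 p + a_2 p² + ⋯, a_i ∈ {0,…,p−1}, and a_0 ≠ 0. Then for every n ≥ 1 the p-adic valuation of the Pochhammer symbol (α)_n = α(α+1)⋯(α+n−1) is given by v_p((α)_n) = Σ_{k≥1} ⌊(n−1 + a_0 + a_1 p + ⋯ + a_{k−1} p^{k−1}) / p^k⌋. -/
/-!
Since `v_p(x) = #{k ≥ 1 : p^k ∣ x}`, summing over the factors gives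
`v_p((α)_n) = ∑_{k ≥ 1} #{i < n : p^k ∣ α + i}`. Modulo `p^k` we have `α ≡ α_k := α.appr k`, and
`a_0 ≠ 0` forces `0 < α_k < p^k`; so the `i` counted are those for which `i + α_k` is a multiple of
`p^k` in `[α_k, α_k + n)`, and there are `⌊(n - 1 + α_k) / p^k⌋` of them.
-/

open Finset

theorem Nat.count_dvd_add_eq_div {q c : ℕ} (hc : 0 < c) (hcq : c < q) (n : ℕ) :
    count (fun i => q ∣ i + c) n = (n - 1 + c) / q := by
  induction n with
  | zero => simp [Nat.div_eq_of_lt hcq]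
  | succ n ih =>
    rw [Nat.count_succ, ih, Nat.add_sub_cancel]
    rcases n with _ | n
    · simp [Nat.not_dvd_of_pos_of_lt hc hcq]
    · rw [Nat.add_sub_cancel, Nat.add_right_comm n 1 c, Nat.succ_div]

namespace PadicInt

variable {p : ℕ} [Fact p.Prime]

theorem valuation_prod {ι : Type*} {s : Finset ι} {f : ι → ℤ_[p]} (hf : ∀ i ∈ s, f i ≠ 0) :
    (∏ i ∈ s, f i).valuation = ∑ i ∈ s, (f i).valuation := by
  classical
  induction s using Finset.induction_on with
  | empty => simp
  | insert a s ha ih =>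
    have hs : ∀ i ∈ s, f i ≠ 0 := fun i hi => hf i (mem_insert_of_mem hi)
    rw [prod_insert ha, sum_insert ha,
      valuation_mul (hf a (mem_insert_self a s)) (prod_ne_zero_iff.2 hs), ih hs]

theorem pow_dvd_iff_le_valuation {x : ℤ_[p]} (hx : x ≠ 0) (n : ℕ) :
    (p : ℤ_[p]) ^ n ∣ x ↔ n ≤ x.valuation := by
  rw [← Ideal.mem_span_singleton, mem_span_pow_iff_le_valuation x hx]

open scoped Classical in
theorem hasSum_ite_pow_succ_dvd {x : ℤ_[p]} (hx : x ≠ 0) :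
    HasSum (fun k : ℕ => if (p : ℤ_[p]) ^ (k + 1) ∣ x then (1 : ℤ) else 0) x.valuation := by
  simp_rw [pow_dvd_iff_le_valuation hx, Nat.succ_le_iff]
  have h := hasSum_sum_of_ne_finset_zero (L := .unconditional ℕ) (s := range x.valuation)
    (f := fun k => if k < x.valuation then (1 : ℤ) else 0) fun k hk => if_neg (by simpa using hk)
  simpa [sum_ite_of_true fun k hk => mem_range.mp hk] using h

theorem pow_dvd_add_natCast_iff (α : ℤ_[p]) (n i : ℕ) :
    (p : ℤ_[p]) ^ n ∣ α + i ↔ p ^ n ∣ i + α.appr n := by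
  have happr : (p : ℤ_[p]) ^ n ∣ α - α.appr n := Ideal.mem_span_singleton.mp (α.appr_spec n)
  have hsplit : α + i = (α - α.appr n) + ((i + α.appr n : ℕ) : ℤ) := by push_cast; ring
  rw [hsplit, dvd_add_right happr, pow_p_dvd_int_iff]
  exact_mod_cast Iff.rfl

end PadicInt

theorem stmt2_general (p : ℕ) [Fact p.Prime] (α : ℤ_[p]) (h0 : α.appr 1 ≠ 0) (n : ℕ)
    (hne : (∏ i ∈ Finset.range n, (α + (i : ℤ_[p]))) ≠ 0) :
    (∏ i ∈ Finset.range n, (α + (i : ℤ_[p]))).valuation =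
      ∑' k : ℕ, (((n - 1 + α.appr (k + 1)) / p ^ (k + 1) : ℕ) : ℤ) := by
  have hfac : ∀ i ∈ range n, α + (i : ℤ_[p]) ≠ 0 := prod_ne_zero_iff.mp hne
  refine (HasSum.tsum_eq ?_).symm
  rw [PadicInt.valuation_prod hfac, Nat.cast_sum]
  convert hasSum_sum fun i hi => PadicInt.hasSum_ite_pow_succ_dvd (hfac i hi) using 1
  funext k
  have happr_pos : 0 < α.appr (k + 1) :=
    (Nat.pos_of_ne_zero h0).trans_le (α.appr_mono (Nat.le_add_left 1 k))
  simp_rw [PadicInt.pow_dvd_add_natCast_iff, sum_boole, ← Nat.count_eq_card_filter_range,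
    Nat.count_dvd_add_eq_div happr_pos (α.appr_lt (k + 1))]

/-- Let `α ∈ ℤ_p` with standard digit expansion `α = a_0 + a_1 p + a_2 p² + ⋯` and `a_0 ≠ 0`
(i.e. `α.appr 1 ≠ 0`). Then for every `n ≥ 1` (such that the Pochhammer product
`(α)_n = α(α+1)⋯(α+n−1)` is nonzero, so that its valuation is finite), one has
`v_p((α)_n) = Σ_{k≥1} ⌊(n−1 + α_k)/p^k⌋`, where `α_k = a_0 + ⋯ + a_{k−1}p^{k−1} = α.appr k`.
The sum has only finitely many nonzero terms. -/
theorem stmt2 (p : ℕ) [Fact p.Prime] (α : ℤ_[p]) (h0 : α.appr 1 ≠ 0) (n : ℕ) (hn : 1 ≤ n)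
    (hne : (∏ i ∈ Finset.range n, (α + (i : ℤ_[p]))) ≠ 0) :
    (∏ i ∈ Finset.range n, (α + (i : ℤ_[p]))).valuation =
      ∑' k : ℕ, (((n - 1 + α.appr (k + 1)) / p ^ (k + 1) : ℕ) : ℤ) :=
  stmt2_general p α h0 n hne
end

section
/- Let G be the semidirect product of the torus T = {(t_1,…,t_p) ∈ (C*)^p : t_1⋯t_p = 1} with ℤ/pℤ acting by cyclic permutation of the coordinates, over an algebraically closed field C of characteristic p. Then the subgroup p(G) generated by all elements of G whose order is a power of p equals G itself. -/
section Aux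

variable {N G : Type*} [CommGroup N] [Group G] (φ : G →* MulAut N)

theorem sdp_pow (t : N) (k : G) (n : ℕ) :
    ((⟨t, k⟩ : N ⋊[φ] G) ^ n) =
      ⟨∏ j ∈ Finset.range n, φ (k ^ j) t, k ^ n⟩ := by
  induction n with
  | zero => simp
  | succ n ih =>
    rw [pow_succ, ih]
    ext
    · simp [SemidirectProduct.mul_left, Finset.prod_range_succ, ← map_pow]
    · simp [SemidirectProduct.mul_right, pow_succ, ← map_pow]

end Aux

variable (C : Type*) [Field C] (p : ℕ) [Fact p.Prime]

/-- The product homomorphism `(C*)^p → C*`. -/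
def prodHom : (ZMod p → Cˣ) →* Cˣ where
  toFun f := ∏ i, f i
  map_one' := by simp
  map_mul' f g := by simp [Finset.prod_mul_distrib]

/-- The torus `T = {(t_1,…,t_p) ∈ (C*)^p : t_1 ⋯ t_p = 1}` (indexed by `ℤ/pℤ`). -/
def Torus : Subgroup (ZMod p → Cˣ) := (prodHom C p).ker

/-- Cyclic shift of coordinates, as an automorphism of the torus `T`. -/
def shiftT (k : ZMod p) : Torus C p ≃* Torus C p where
  toFun f := ⟨fun i => (f : ZMod p → Cˣ) (i + k), by
    have hf : prodHom C p (f : ZMod p → Cˣ) = 1 := f.2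
    show (fun i => (f : ZMod p → Cˣ) (i + k)) ∈ (prodHom C p).ker
    rw [MonoidHom.mem_ker]
    show (∏ i, (f : ZMod p → Cˣ) (i + k)) = 1
    exact (Fintype.prod_equiv (Equiv.addRight k)
      (fun i => (f : ZMod p → Cˣ) (i + k)) (f : ZMod p → Cˣ) fun i => rfl).trans hf⟩
  invFun f := ⟨fun i => (f : ZMod p → Cˣ) (i - k), by
    have hf : prodHom C p (f : ZMod p → Cˣ) = 1 := f.2
    show (fun i => (f : ZMod p → Cˣ) (i - k)) ∈ (prodHom C p).ker
    rw [MonoidHom.mem_ker]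
    show (∏ i, (f : ZMod p → Cˣ) (i - k)) = 1
    exact (Fintype.prod_equiv (Equiv.subRight k)
      (fun i => (f : ZMod p → Cˣ) (i - k)) (f : ZMod p → Cˣ) fun i => rfl).trans hf⟩
  left_inv f := by ext i; simp
  right_inv f := by ext i; simp
  map_mul' f g := rfl

/-- The action of `ℤ/pℤ` on the torus `T` by cyclic permutation of the coordinates. -/
def cyclicAction : Multiplicative (ZMod p) →* MulAut (Torus C p) where
  toFun k := shiftT C p (Multiplicative.toAdd k)
  map_one' := by
    ext f i
    simp [shiftT]
  map_mul' k l := by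
    ext f i
    have h : i + (Multiplicative.toAdd k + Multiplicative.toAdd l) =
        i + Multiplicative.toAdd k + Multiplicative.toAdd l := by ring
    simp [shiftT, toAdd_mul, h]

theorem keyPow (t : Torus C p) (k : Multiplicative (ZMod p))
    (hk : Multiplicative.toAdd k ≠ 0) :
    (⟨t, k⟩ : Torus C p ⋊[cyclicAction C p] Multiplicative (ZMod p)) ^ p = 1 := by
  haveI : NeZero p := ⟨(Fact.out : p.Prime).pos.ne'⟩
  rw [sdp_pow]
  have hkp : k ^ p = 1 := by
    have h0 : Multiplicative.toAdd (k ^ p) = 0 := by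
      rw [toAdd_pow, nsmul_eq_mul, ZMod.natCast_self, zero_mul]
    exact Multiplicative.toAdd.injective h0
  have hL : (∏ j ∈ Finset.range p, cyclicAction C p (k ^ j) t) = (1 : Torus C p) := by
    refine Subtype.ext (funext fun i => ?_)
    set k' := Multiplicative.toAdd k with hk'
    let ev : Torus C p →* Cˣ := (Pi.evalMonoidHom (fun _ => Cˣ) i).comp (Torus C p).subtype
    have hcoe : ((∏ j ∈ Finset.range p, cyclicAction C p (k ^ j) t : Torus C p) :
        ZMod p → Cˣ) i = ∏ j ∈ Finset.range p, (t : ZMod p → Cˣ) (i + (j : ZMod p) * k') := by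
      have := map_prod ev (fun j => cyclicAction C p (k ^ j) t) (Finset.range p)
      refine this.trans (Finset.prod_congr rfl fun j _ => ?_)
      show (t : ZMod p → Cˣ) (i + Multiplicative.toAdd (k ^ j)) = _
      rw [toAdd_pow, nsmul_eq_mul]
    have hre : ∏ j ∈ Finset.range p, (t : ZMod p → Cˣ) (i + (j : ZMod p) * k')
        = ∏ x : ZMod p, (t : ZMod p → Cˣ) (i + x * k') := by
      refine Finset.prod_nbij' (fun j => (j : ZMod p)) (fun x => x.val)
        (fun j _ => Finset.mem_univ _) (fun x _ => Finset.mem_range.2 (ZMod.val_lt x))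
        (fun j hj => ZMod.val_cast_of_lt (Finset.mem_range.1 hj))
        (fun x _ => ZMod.natCast_rightInverse x) (fun j _ => rfl)
    have heq : ∏ x : ZMod p, (t : ZMod p → Cˣ) (i + x * k')
        = ∏ x : ZMod p, (t : ZMod p → Cˣ) x :=
      Fintype.prod_equiv ((Equiv.mulRight₀ k' hk).trans (Equiv.addLeft i))
        _ _ (fun x => rfl)
    have ht : (∏ x : ZMod p, (t : ZMod p → Cˣ) x) = 1 := t.2
    show ((∏ j ∈ Finset.range p, cyclicAction C p (k ^ j) t : Torus C p) :
        ZMod p → Cˣ) i = 1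
    rw [hcoe, hre, heq, ht]
  rw [hkp, hL]
  rfl

theorem mem_pSet (t : Torus C p) (k : Multiplicative (ZMod p))
    (hk : Multiplicative.toAdd k ≠ 0) :
    (⟨t, k⟩ : Torus C p ⋊[cyclicAction C p] Multiplicative (ZMod p)) ∈
      {g : Torus C p ⋊[cyclicAction C p] Multiplicative (ZMod p) |
        ∃ m : ℕ, orderOf g = p ^ m} := by
  have hdvd : orderOf (⟨t, k⟩ : Torus C p ⋊[cyclicAction C p] Multiplicative (ZMod p)) ∣ p :=
    orderOf_dvd_of_pow_eq_one (keyPow C p t k hk)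
  rcases ((Fact.out : p.Prime).eq_one_or_self_of_dvd _ hdvd) with h | h
  · exact ⟨0, by simpa using h⟩
  · exact ⟨1, by simpa using h⟩

/-- Maurischat's group `G = T ⋊ ℤ/pℤ` (with `C` algebraically closed of characteristic `p`)
satisfies `p(G) = G`: the subgroup generated by all elements of `p`-power order is all
of `G`. -/
theorem stmt5 [IsAlgClosed C] [CharP C p] :
    Subgroup.closure
      {g : Torus C p ⋊[cyclicAction C p] Multiplicative (ZMod p) |
        ∃ m : ℕ, orderOf g = p ^ m} = ⊤ := by
  rw [Subgroup.eq_top_iff']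
  rintro ⟨t, k⟩
  by_cases hk : Multiplicative.toAdd k = 0
  · have hk1 : k = 1 := Multiplicative.toAdd.injective hk
    subst hk1
    set x : Multiplicative (ZMod p) := Multiplicative.ofAdd 1 with hx'
    have hx : Multiplicative.toAdd x ≠ 0 := one_ne_zero
    have hdecomp : (⟨t, 1⟩ : Torus C p ⋊[cyclicAction C p] Multiplicative (ZMod p))
        = ⟨t, x⟩ * ⟨1, x⟩⁻¹ := by
      ext <;> simp [SemidirectProduct.mul_left, SemidirectProduct.mul_right,
        SemidirectProduct.inv_left, SemidirectProduct.inv_right]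
    rw [hdecomp]
    exact mul_mem (Subgroup.subset_closure (mem_pSet C p t x hx))
      (inv_mem (Subgroup.subset_closure (mem_pSet C p 1 x hx)))
  · exact Subgroup.subset_closure (mem_pSet C p t k hk)
end

section
/- Let C be an algebraically closed field and α ∈ C* not a root of unity. The Zariski closure of the subgroup of GL_2(C) generated by [[α,0],[0,1]] and [[α,1],[0,1]] equals the Borel-type group {[[a,b],[0,1]] : a ∈ C*, b ∈ C}. -/
/-!
Every element of `⟨A, B⟩` has second row `(0, 1)`, which gives one inclusion. Conversely,
`B A⁻¹ = [[1,1],[0,1]]` and conjugating it by `Aᵐ` shows that `⟨A, B⟩` contains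
`[[αⁿ, αᵐ], [0, 1]]` for all `n m : ℕ`. Since `α` has infinite order, the points `(αⁿ, αᵐ)`
form a product of two infinite sets, so a polynomial in `a, b` vanishing on them vanishes
identically; hence every `[[a, b], [0, 1]]` lies in the Zariski closure.
-/

open MvPolynomial

namespace MvPolynomial

theorem eval_eval_eq_zero_of_eq_zero_on_pi {R σ τ : Type*} [CommRing R] [IsDomain R]
    (f : MvPolynomial τ R) (v : τ → MvPolynomial σ R) {s : σ → Set R} (hs : ∀ i, (s i).Infinite)
    (h : ∀ x ∈ Set.univ.pi s, eval (fun t => eval x (v t)) f = 0) (x : σ → R) :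
    eval (fun t => eval x (v t)) f = 0 := by
  have eval_bind₁ : ∀ y : σ → R, eval y (bind₁ v f) = eval (fun t => eval y (v t)) f := by
    intro y
    simp only [eval, eval₂Hom_bind₁]
  have hzero : bind₁ v f = 0 :=
    funext_set s hs fun y hy => by rw [eval_bind₁, h y hy, map_zero]
  rw [← eval_bind₁, hzero, map_zero]

end MvPolynomial

section AffineGroup

variable {R : Type*} [CommRing R]

/-- The affine map `x ↦ a x + b` of the line, in homogeneous coordinates. -/
def affineMatrix (a b : R) : Matrix (Fin 2) (Fin 2) R :=
  !![a, b; 0, 1]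

theorem affineMatrix_mul (a b a' b' : R) :
    affineMatrix a b * affineMatrix a' b' = affineMatrix (a * a') (a * b' + b) := by
  simp only [affineMatrix, Matrix.mul_fin_two]
  congr <;> ring

def affineGL (a : Rˣ) (b : R) : GL (Fin 2) R :=
  ⟨affineMatrix (a : R) b, affineMatrix (↑a⁻¹ : R) (-(↑a⁻¹ * b)),
    by rw [affineMatrix_mul]; simp [affineMatrix, Matrix.one_fin_two],
    by rw [affineMatrix_mul]; simp [affineMatrix, Matrix.one_fin_two]⟩

@[simp]
theorem val_affineGL (a : Rˣ) (b : R) :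
    (affineGL a b : Matrix (Fin 2) (Fin 2) R) = affineMatrix (a : R) b :=
  rfl

theorem affineGL_mul (a a' : Rˣ) (b b' : R) :
    affineGL a b * affineGL a' b' = affineGL (a * a') (a * b' + b) :=
  Units.ext (affineMatrix_mul _ _ _ _)

theorem affineGL_pow (a : Rˣ) (n : ℕ) : affineGL a 0 ^ n = affineGL (a ^ n) 0 := by
  induction n with
  | zero => exact Units.ext (by simp [affineMatrix, Matrix.one_fin_two])
  | succ n ih => rw [pow_succ, ih, affineGL_mul, pow_succ, mul_zero, add_zero]

theorem affineGL_mem_closure (α : Rˣ) (n m : ℕ) :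
    affineGL (α ^ n) ((α ^ m : Rˣ) : R) ∈ Subgroup.closure {affineGL α 0, affineGL α 1} := by
  set H := Subgroup.closure {affineGL α 0, affineGL α 1}
  have hA : affineGL α 0 ∈ H := Subgroup.subset_closure (by simp)
  have hB : affineGL α 1 ∈ H := Subgroup.subset_closure (by simp)
  have unipotent : affineGL 1 1 = affineGL α 1 * (affineGL α 0)⁻¹ :=
    eq_mul_inv_of_mul_eq (by rw [affineGL_mul]; simp)
  have conj : affineGL 1 ((α ^ m : Rˣ) : R) =
      affineGL α 0 ^ m * affineGL 1 1 * (affineGL α 0 ^ m)⁻¹ :=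
    eq_mul_inv_of_mul_eq (by rw [affineGL_pow, affineGL_mul, affineGL_mul]; simp)
  have split : affineGL (α ^ n) ((α ^ m : Rˣ) : R) =
      affineGL 1 ((α ^ m : Rˣ) : R) * affineGL α 0 ^ n := by
    rw [affineGL_pow, affineGL_mul]; simp
  rw [split, conj, unipotent]
  exact H.mul_mem (H.mul_mem (H.mul_mem (H.pow_mem hA m) (H.mul_mem hB (H.inv_mem hA)))
    (H.inv_mem (H.pow_mem hA m))) (H.pow_mem hA n)

variable (R) in
def affineSubgroup : Subgroup (GL (Fin 2) R) where
  carrier := {g | (g : Matrix (Fin 2) (Fin 2) R) 1 0 = 0 ∧ (g : Matrix (Fin 2) (Fin 2) R) 1 1 = 1}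
  one_mem' := by simp
  mul_mem' := by
    rintro g h ⟨hg₀, hg₁⟩ ⟨hh₀, hh₁⟩
    simp [Matrix.mul_apply, Fin.sum_univ_two, hg₀, hg₁, hh₀, hh₁]
  inv_mem' := by
    rintro g ⟨hg₀, hg₁⟩
    have hginv : (g : Matrix (Fin 2) (Fin 2) R) * (↑g⁻¹ : Matrix (Fin 2) (Fin 2) R) = 1 := by
      rw [← Units.val_mul, mul_inv_cancel, Units.val_one]
    have h₀ := congrFun (congrFun hginv 1) 0
    have h₁ := congrFun (congrFun hginv 1) 1
    simp only [Matrix.mul_apply, Fin.sum_univ_two, hg₀, hg₁] at h₀ h₁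
    simpa using And.intro h₀ h₁

theorem eval_affineMatrix_X {σ : Type*} (x : σ → R) (i j : σ) (k l : Fin 2) :
    eval x (affineMatrix (X i) (X j) k l) = affineMatrix (x i) (x j) k l := by
  fin_cases k <;> fin_cases l <;> simp [affineMatrix]

end AffineGroup

theorem eval_affineMatrix_eq_zero_of_forall_mem_closure {R : Type*} [CommRing R] [IsDomain R]
    (α : Rˣ) (hα : ¬IsOfFinOrder α) (f : MvPolynomial (Fin 2 × Fin 2) R)
    (hf : ∀ h ∈ Subgroup.closure {affineGL α 0, affineGL α 1},
      eval (fun q => (h : Matrix (Fin 2) (Fin 2) R) q.1 q.2) f = 0)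
    (a b : R) : eval (fun q => affineMatrix a b q.1 q.2) f = 0 := by
  have hinj : Function.Injective fun n : ℕ => ((α ^ n : Rˣ) : R) :=
    Units.val_injective.comp (injective_pow_iff_not_isOfFinOrder.mpr hα)
  have key := eval_eval_eq_zero_of_eq_zero_on_pi f (fun q => affineMatrix (X 0) (X 1) q.1 q.2)
    (s := fun _ => Set.range fun n : ℕ => ((α ^ n : Rˣ) : R))
    (fun _ => Set.infinite_range_of_injective hinj) ?_ ![a, b]
  · simpa [eval_affineMatrix_X] using key
  · rintro x hx
    obtain ⟨n, hn⟩ := hx 0 trivial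
    obtain ⟨m, hm⟩ := hx 1 trivial
    simpa only [val_affineGL, eval_affineMatrix_X, ← hn, ← hm] using
      hf _ (affineGL_mem_closure α n m)

theorem stmt10_general (C : Type*) [Field C] (α : Cˣ)
    (hα : ∀ n : ℕ, 0 < n → α ^ n ≠ 1) (A B : GL (Fin 2) C)
    (hA : (A : Matrix (Fin 2) (Fin 2) C) = !![(α : C), 0; 0, 1])
    (hB : (B : Matrix (Fin 2) (Fin 2) C) = !![(α : C), 1; 0, 1]) :
    ∀ g : GL (Fin 2) C,
      (∀ f : MvPolynomial (Fin 2 × Fin 2) C,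
        (∀ h : GL (Fin 2) C, h ∈ Subgroup.closure {A, B} →
          MvPolynomial.eval (fun q => (h : Matrix (Fin 2) (Fin 2) C) q.1 q.2) f = 0) →
        MvPolynomial.eval (fun q => (g : Matrix (Fin 2) (Fin 2) C) q.1 q.2) f = 0) ↔
      ((g : Matrix (Fin 2) (Fin 2) C) 1 0 = 0 ∧ (g : Matrix (Fin 2) (Fin 2) C) 1 1 = 1) := by
  obtain rfl : A = affineGL α 0 := Units.ext hA
  obtain rfl : B = affineGL α 1 := Units.ext hB
  intro g
  constructor
  · intro hg
    have hle : Subgroup.closure {affineGL α 0, affineGL α 1} ≤ affineSubgroup C := by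
      rw [Subgroup.closure_le]
      rintro _ (rfl | rfl) <;> simp [affineSubgroup, affineMatrix]
    have h₀ := hg (X (1, 0)) fun h hh => by simpa using (hle hh).1
    have h₁ := hg (X (1, 1) - 1) fun h hh => by simpa [sub_eq_zero] using (hle hh).2
    simpa [sub_eq_zero] using And.intro h₀ h₁
  · rintro ⟨hg₀, hg₁⟩ f hf
    have hg : (g : Matrix (Fin 2) (Fin 2) C) = affineMatrix (g 0 0) (g 0 1) := by
      ext i j; fin_cases i <;> fin_cases j <;> simp [affineMatrix, hg₀, hg₁]
    rw [hg]
    exact eval_affineMatrix_eq_zero_of_forall_mem_closure α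
      (by simpa [isOfFinOrder_iff_pow_eq_one] using hα) f hf _ _

/-- Let `C` be an algebraically closed field and `α ∈ C*` not a root of unity. The Zariski
closure in `GL_2(C)` of the subgroup `H` generated by `[[α,0],[0,1]]` and `[[α,1],[0,1]]`
is exactly the Borel-type group `B = {[[a,b],[0,1]] : a ∈ C*, b ∈ C}`: an element
`g ∈ GL_2(C)` lies in the Zariski closure of `H` (every polynomial in the matrix entries
vanishing on `H` vanishes at `g`) if and only if `g` has the form `[[a,b],[0,1]]`,
i.e. `g₁₀ = 0` and `g₁₁ = 1`. -/
theorem stmt10 (C : Type*) [Field C] [IsAlgClosed C] (α : Cˣ)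
    (hα : ∀ n : ℕ, 0 < n → α ^ n ≠ 1) (A B : GL (Fin 2) C)
    (hA : (A : Matrix (Fin 2) (Fin 2) C) = !![(α : C), 0; 0, 1])
    (hB : (B : Matrix (Fin 2) (Fin 2) C) = !![(α : C), 1; 0, 1]) :
    ∀ g : GL (Fin 2) C,
      (∀ f : MvPolynomial (Fin 2 × Fin 2) C,
        (∀ h : GL (Fin 2) C, h ∈ Subgroup.closure {A, B} →
          MvPolynomial.eval (fun q => (h : Matrix (Fin 2) (Fin 2) C) q.1 q.2) f = 0) →
        MvPolynomial.eval (fun q => (g : Matrix (Fin 2) (Fin 2) C) q.1 q.2) f = 0) ↔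
      ((g : Matrix (Fin 2) (Fin 2) C) 1 0 = 0 ∧ (g : Matrix (Fin 2) (Fin 2) C) 1 1 = 1) :=
  stmt10_general C α hα A B hA hB
end

section
/- Let ℤ_p be the p-adic integers. For α, β ∈ ℤ_p, the reductions mod p of the binomial coefficient sequences coincide, i.e., (α choose n) ≡ (β choose n) mod p for all n ≥ 0, if and only if α = β. More precisely: if (α choose n) ≡ 0 mod p for all n ≥ 1 then α = 0. -/
/-!
If `α ≠ 0` has valuation `m`, then `(α choose p^m) = ∏_{j < p^m} (α - j) / (p^m - j)` is a `p`-adic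
unit: for `j = 0` numerator and denominator both have norm `p^(-m)`, and for `0 < j < p^m` both
have the norm of `j`, which exceeds `p^(-m)` by the ultrametric inequality. This gives the second
claim. For the first, Vandermonde's identity
`(α choose n) = ∑_{i+k=n} (α - β choose i) (β choose k)` shows by strong induction on `n` that
`(α - β choose n) ≡ 0 mod p` for all `n ≥ 1`, so `α - β = 0` by the second claim.
-/

/-- The binomial coefficient `(α choose n) = α(α−1)⋯(α−n+1)/n!` of a `p`-adic integer `α`,
computed in `ℚ_p` (it actually lies in `ℤ_p`). -/
noncomputable def pchoose (p : ℕ) [Fact p.Prime] (α : ℤ_[p]) (n : ℕ) : ℚ_[p] :=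
  (((descPochhammer ℤ_[p] n).eval α : ℤ_[p]) : ℚ_[p]) / (n.factorial : ℚ_[p])

open Finset Polynomial

theorem Ring.choose_sub_succ_mem_of_forall_choose_sub_choose_mem {R : Type*} [CommRing R]
    [BinomialRing R] (I : Ideal R) {α β : R} (h : ∀ n, choose α n - choose β n ∈ I) (n : ℕ) :
    choose (α - β) (n + 1) ∈ I := by
  induction n using Nat.strong_induction_on with
  | _ n ih =>
  have hvdm : choose α (n + 1) - choose β (n + 1) =
      ∑ k ∈ range n, choose (α - β) (k + 1) * choose β (n - k) + choose (α - β) (n + 1) := by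
    have := add_choose_eq (n + 1) (Commute.all (α - β) β)
    rw [sub_add_cancel, Nat.sum_antidiagonal_eq_sum_range_succ_mk, sum_range_succ',
      sum_range_succ] at this
    simp [this]
  have hlower : ∑ k ∈ range n, choose (α - β) (k + 1) * choose β (n - k) ∈ I :=
    I.sum_mem fun k hk ↦ I.mul_mem_right _ (ih k (mem_range.1 hk))
  simpa [hvdm] using I.sub_mem (h (n + 1)) hlower

lemma norm_sub_eq_norm_right_of_norm_lt {S : Type*} [SeminormedAddCommGroup S]
    [IsUltrametricDist S] {x y : S} (h : ‖x‖ < ‖y‖) : ‖x - y‖ = ‖y‖ := by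
  rw [sub_eq_add_neg, IsUltrametricDist.norm_add_eq_max_of_norm_ne_norm (by simpa using h.ne),
    norm_neg, max_eq_right h.le]

lemma norm_descPochhammer_eval_eq_of_forall_norm_sub_eq {R : Type*} [NormedCommRing R]
    [NormMulClass R] [NormOneClass R] {n : ℕ} {a b : R} (h : ∀ j < n, ‖a - j‖ = ‖b - j‖) :
    ‖(descPochhammer R n).eval a‖ = ‖(descPochhammer R n).eval b‖ := by
  simp only [descPochhammer_eval_eq_prod_range, norm_prod]
  exact prod_congr rfl fun j hj ↦ h j (mem_range.1 hj)

section pchoose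

variable {p : ℕ} [Fact p.Prime]

lemma pchoose_eq_coe_choose (α : ℤ_[p]) (n : ℕ) : pchoose p α n = (Ring.choose α n : ℤ_[p]) := by
  have h := Ring.descPochhammer_eq_factorial_smul_choose α n
  rw [← aeval_eq_smeval, aeval_def, ← eval_map, descPochhammer_map] at h
  rw [pchoose, h, nsmul_eq_mul, PadicInt.coe_mul, PadicInt.coe_natCast,
    mul_div_cancel_left₀ _ (by exact_mod_cast n.factorial_ne_zero)]

lemma norm_pchoose (α : ℤ_[p]) (n : ℕ) : ‖pchoose p α n‖ = ‖Ring.choose α n‖ := by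
  rw [pchoose_eq_coe_choose, PadicInt.norm_def]

lemma norm_pchoose_eq_one_of_forall_norm_sub_eq {α : ℤ_[p]} {n : ℕ}
    (h : ∀ j < n, ‖α - j‖ = ‖(n : ℤ_[p]) - j‖) : ‖pchoose p α n‖ = 1 := by
  have hfac : ‖(n.factorial : ℚ_[p])‖ = ‖(descPochhammer ℤ_[p] n).eval (n : ℤ_[p])‖ := by
    rw [descPochhammer_eval_eq_descFactorial, Nat.descFactorial_self, PadicInt.norm_def]
    simp
  rw [pchoose, norm_div, ← PadicInt.norm_def, hfac,
    norm_descPochhammer_eval_eq_of_forall_norm_sub_eq h, div_self]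
  rw [norm_ne_zero_iff, descPochhammer_eval_eq_descFactorial, Nat.descFactorial_self]
  exact_mod_cast n.factorial_ne_zero

lemma PadicInt.norm_p_pow_lt_norm_natCast {j m : ℕ} (hj0 : j ≠ 0) (hjm : j < p ^ m) :
    ‖(p : ℤ_[p]) ^ m‖ < ‖(j : ℤ_[p])‖ := by
  rw [PadicInt.norm_p_pow, ← not_le]
  intro hle
  have hdvd : p ^ m ∣ j := by
    exact_mod_cast (PadicInt.norm_int_le_pow_iff_dvd (k := j)).1 (by simpa using hle)
  exact (Nat.le_of_dvd (Nat.pos_of_ne_zero hj0) hdvd).not_gt hjm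

lemma norm_pchoose_p_pow_valuation {α : ℤ_[p]} (hα : α ≠ 0) :
    ‖pchoose p α (p ^ α.valuation)‖ = 1 := by
  have hnorm : ‖α‖ = ‖(p : ℤ_[p]) ^ α.valuation‖ := by
    rw [PadicInt.norm_eq_zpow_neg_valuation hα, PadicInt.norm_p_pow]
  refine norm_pchoose_eq_one_of_forall_norm_sub_eq fun j hj ↦ ?_
  rcases eq_or_ne j 0 with rfl | hj0
  · simpa using hnorm
  · have hlt := PadicInt.norm_p_pow_lt_norm_natCast hj0 hj
    rw [Nat.cast_pow, norm_sub_eq_norm_right_of_norm_lt (hnorm ▸ hlt),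
      norm_sub_eq_norm_right_of_norm_lt hlt]

lemma eq_zero_of_forall_norm_pchoose_lt_one {α : ℤ_[p]}
    (h : ∀ n : ℕ, 1 ≤ n → ‖pchoose p α n‖ < 1) : α = 0 := by
  by_contra hα
  have hlt := h (p ^ α.valuation) (Nat.one_le_pow _ _ (Fact.out : p.Prime).pos)
  exact (norm_pchoose_p_pow_valuation hα).not_lt hlt

lemma eq_of_forall_norm_pchoose_sub_lt_one {α β : ℤ_[p]}
    (h : ∀ n : ℕ, ‖pchoose p α n - pchoose p β n‖ < 1) : α = β := by
  refine sub_eq_zero.1 (eq_zero_of_forall_norm_pchoose_lt_one fun n hn ↦ ?_)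
  obtain ⟨n, rfl⟩ := Nat.exists_eq_add_of_le' hn
  rw [norm_pchoose, PadicInt.norm_lt_one_iff_dvd, ← Ideal.mem_span_singleton]
  refine Ring.choose_sub_succ_mem_of_forall_choose_sub_choose_mem _ (fun n ↦ ?_) n
  rw [Ideal.mem_span_singleton, ← PadicInt.norm_lt_one_iff_dvd, PadicInt.norm_def]
  simpa [pchoose_eq_coe_choose] using h n

end pchoose

/-- For `α, β ∈ ℤ_p`, the reductions mod `p` of the binomial coefficients coincide
(`(α choose n) ≡ (β choose n) mod p` for all `n`, i.e. the difference has norm `< 1`)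
if and only if `α = β`; and the key special case: if `(α choose n) ≡ 0 mod p` for all
`n ≥ 1`, then `α = 0`. -/
theorem stmt11 (p : ℕ) [Fact p.Prime] :
    (∀ α β : ℤ_[p], (∀ n : ℕ, ‖pchoose p α n - pchoose p β n‖ < 1) ↔ α = β) ∧
    (∀ α : ℤ_[p], (∀ n : ℕ, 1 ≤ n → ‖pchoose p α n‖ < 1) → α = 0) :=
  ⟨fun _ _ ↦ ⟨eq_of_forall_norm_pchoose_sub_lt_one, fun h ↦ by simp [h]⟩,
    fun _ ↦ eq_zero_of_forall_norm_pchoose_lt_one⟩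
end

section
/- Let C be a complete non-archimedean algebraically closed field of characteristic p, and let e = Π_{m≥0}(1 + c_m z^{p^m}) ∈ C[[z]] with 1/p ≤ |c_m| < 1 for all m. Then for each n ≥ 1 the logarithmic derivative-type coefficient a_n := ∂^{(n)}(e)/e lies in the Tate algebra C⟨z⟩; in fact a_n equals ∂^{(n)}(P_k)/P_k where P_k = Π_{m=0}^{k−1}(1 + c_m z^{p^m}) for any k with p^k > n, where ∂^{(n)} is the standard higher derivation ∂^{(n)}(z^j) = (j choose n) z^{j−n}. -/
open PowerSeries Filter

variable {C : Type*} [NontriviallyNormedField C]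

/-- Membership in the Tate algebra `C⟨z⟩ ⊂ C[[z]]`: the coefficients tend to `0`. -/
def TateMem (f : C⟦X⟧) : Prop :=
  Tendsto (fun n => ‖PowerSeries.coeff n f‖) atTop (nhds 0)

/-- The standard higher derivation `∂^{(n)}` on `C[[z]]`, with `∂^{(n)}(z^j) = (j choose n) z^{j-n}`. -/
noncomputable def hderiv (n : ℕ) (f : C⟦X⟧) : C⟦X⟧ :=
  PowerSeries.mk fun j => ((j + n).choose n : C) * PowerSeries.coeff (j + n) f

/-!
If `n < p ^ k`, Lucas's theorem makes `j.choose n` modulo `p` depend only on `j` modulo `p ^ k`,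
so in characteristic `p` the operator `∂^{(n)}` commutes with multiplication by power series in
`z ^ (p ^ k)`. Writing `e = P_k · T_k` with `T_k` such a series gives
`∂^{(n)}(e) = ∂^{(n)}(P_k) · T_k`, hence `∂^{(n)}(e) / e = ∂^{(n)}(P_k) / P_k`. The right-hand
side lies in `C⟨z⟩`: `∂^{(n)}` preserves the Tate algebra since binomial coefficients have norm
`≤ 1` in an ultrametric field, and `(1 + c z^q)⁻¹ = Σ (-c)^s z^{qs}` lies in it since `‖c‖ < 1`.
-/

open Finset

theorem Nat.choose_modEq_choose_of_modEq {p k m m' n : ℕ} [Fact p.Prime] (hn : n < p ^ k)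
    (h : m ≡ m' [MOD p ^ k]) : m.choose n ≡ m'.choose n [MOD p] := by
  have hdigit : ∀ i ∈ range k, m / p ^ i % p = m' / p ^ i % p := fun i hi => by
    have hi : m ≡ m' [MOD p ^ i * p] := h.of_dvd (pow_dvd_pow p (mem_range.mp hi))
    rw [← Nat.mod_mul_right_div_self, ← Nat.mod_mul_right_div_self, hi]
  have hlucas : ∀ a : ℕ, a.choose n ≡ ∏ i ∈ range k, (a / p ^ i % p).choose (n / p ^ i % p)
      [ZMOD p] := fun a => by
    simpa [Nat.div_eq_of_lt hn] using
      Choose.choose_modEq_choose_mul_prod_range_choose (p := p) (n := a) (k := n) k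
  rw [← Int.natCast_modEq_iff]
  refine (hlucas m).trans ?_
  rw [prod_congr rfl fun i hi => by rw [hdigit i hi]]
  exact (hlucas m').symm

lemma X_pow_mul_hderiv (n : ℕ) (f : C⟦X⟧) :
    X ^ n * hderiv n f = PowerSeries.mk fun j => (j.choose n : C) * coeff j f := by
  ext j
  rw [coeff_X_pow_mul', coeff_mk]
  split_ifs with h
  · rw [hderiv, coeff_mk, Nat.sub_add_cancel h]
  · rw [Nat.choose_eq_zero_of_lt (not_le.mp h), Nat.cast_zero, zero_mul]

lemma hderiv_mul_of_coeff_eq_zero {p k n : ℕ} [Fact p.Prime] [CharP C p] (hn : n < p ^ k)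
    (f T : C⟦X⟧) (hT : ∀ j, ¬ p ^ k ∣ j → coeff j T = 0) :
    hderiv n (f * T) = hderiv n f * T := by
  refine mul_left_cancel₀ (pow_ne_zero n X_ne_zero) ?_
  rw [← mul_assoc, X_pow_mul_hderiv, X_pow_mul_hderiv]
  ext j
  simp only [coeff_mk, coeff_mul, mul_sum]
  refine sum_congr rfl fun ⟨a, b⟩ hab => ?_
  rw [HasAntidiagonal.mem_antidiagonal] at hab
  by_cases hb : p ^ k ∣ b
  · obtain ⟨t, rfl⟩ := hb
    have hmod : a + p ^ k * t ≡ a [MOD p ^ k] := Nat.add_mul_mod_self_left a (p ^ k) t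
    rw [← hab, (CharP.natCast_eq_natCast C p).mpr (Nat.choose_modEq_choose_of_modEq hn hmod)]
    ring
  · rw [hT b hb]
    ring

namespace PowerSeries

variable {k : Type*} [Field k]

lemma mul_inv_eq_mul_inv_of_mul_eq_mul {a b f g : k⟦X⟧} (hf : constantCoeff f ≠ 0)
    (hg : constantCoeff g ≠ 0) (h : a * g = b * f) : a * f⁻¹ = b * g⁻¹ := by
  rw [eq_mul_inv_iff_mul_eq hg, mul_right_comm, h, mul_assoc, PowerSeries.mul_inv_cancel _ hf,
    mul_one]

lemma inv_prod {ι : Type*} (s : Finset ι) (f : ι → k⟦X⟧)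
    (hf : ∀ i ∈ s, constantCoeff (f i) ≠ 0) : (∏ i ∈ s, f i)⁻¹ = ∏ i ∈ s, (f i)⁻¹ := by
  rw [inv_eq_iff_mul_eq_one (by simpa [map_prod, prod_ne_zero_iff] using hf),
    ← prod_mul_distrib]
  exact prod_eq_one fun i hi => PowerSeries.inv_mul_cancel _ (hf i hi)

lemma expand_inv (q : ℕ) (hq : q ≠ 0) {f : k⟦X⟧} (hf : constantCoeff f ≠ 0) :
    (expand q hq f)⁻¹ = expand q hq f⁻¹ := by
  rw [inv_eq_iff_mul_eq_one (by rwa [constantCoeff_expand]), ← map_mul,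
    PowerSeries.inv_mul_cancel _ hf, map_one]

lemma constantCoeff_one_add_C_mul_X_pow (a : k) {q : ℕ} (hq : q ≠ 0) :
    constantCoeff (1 + PowerSeries.C a * X ^ q) = 1 := by
  simp [hq]

end PowerSeries

lemma tateMem_iff_isRestricted {f : C⟦X⟧} : TateMem f ↔ IsRestricted 1 f := by
  simp [isRestricted_iff', TateMem]

lemma tateMem_one : TateMem (1 : C⟦X⟧) :=
  tateMem_iff_isRestricted.2 (isRestricted_one 1)

lemma TateMem.mul [IsUltrametricDist C] {f g : C⟦X⟧} (hf : TateMem f) (hg : TateMem g) :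
    TateMem (f * g) :=
  tateMem_iff_isRestricted.2
    (isRestricted.mul 1 (tateMem_iff_isRestricted.1 hf) (tateMem_iff_isRestricted.1 hg))

lemma tateMem_prod [IsUltrametricDist C] {ι : Type*} {s : Finset ι} {f : ι → C⟦X⟧}
    (hf : ∀ i ∈ s, TateMem (f i)) : TateMem (∏ i ∈ s, f i) :=
  prod_induction f TateMem (fun _ _ => TateMem.mul) tateMem_one hf

lemma tateMem_one_add_C_mul_X_pow (a : C) (q : ℕ) : TateMem (1 + PowerSeries.C a * X ^ q) := by
  rw [tateMem_iff_isRestricted, ← monomial_eq_C_mul_X_pow]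
  exact isRestricted.add 1 (isRestricted_one 1) (isRestricted_monomial 1 q a)

lemma TateMem.hderiv [IsUltrametricDist C] {f : C⟦X⟧} (hf : TateMem f) (n : ℕ) :
    TateMem (hderiv n f) := by
  refine squeeze_zero (fun _ => norm_nonneg _) (fun j => ?_) (hf.comp (tendsto_add_atTop_nat n))
  rw [_root_.hderiv, coeff_mk, norm_mul]
  exact mul_le_of_le_one_left (norm_nonneg _) (IsUltrametricDist.norm_natCast_le_one C _)

lemma TateMem.expand {f : C⟦X⟧} (hf : TateMem f) (q : ℕ) (hq : q ≠ 0) :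
    TateMem (expand q hq f) := by
  refine squeeze_zero (fun _ => norm_nonneg _) (fun j => ?_)
    (hf.comp (Nat.tendsto_div_const_atTop hq))
  rw [coeff_expand]
  split_ifs <;> simp

lemma tateMem_inv_one_add_C_mul_X {a : C} (ha : ‖a‖ < 1) :
    TateMem (1 + PowerSeries.C a * X)⁻¹ := by
  have hinv : (1 + PowerSeries.C a * X)⁻¹ = rescale (-a) (PowerSeries.mk 1) := by
    rw [inv_eq_iff_mul_eq_one (by simp)]
    calc rescale (-a) (PowerSeries.mk 1) * (1 + PowerSeries.C a * X)
          = rescale (-a) (PowerSeries.mk 1 * (1 - X)) := by simp [rescale_X, sub_eq_add_neg]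
      _ = 1 := by rw [mk_one_mul_one_sub_eq_one, map_one]
  rw [hinv]
  simpa [TateMem, coeff_rescale] using tendsto_pow_atTop_nhds_zero_of_lt_one (norm_nonneg a) ha

lemma tateMem_inv_one_add_C_mul_X_pow {a : C} (ha : ‖a‖ < 1) {q : ℕ} (hq : q ≠ 0) :
    TateMem (1 + PowerSeries.C a * X ^ q)⁻¹ := by
  have hexpand : 1 + PowerSeries.C a * X ^ q = expand q hq (1 + PowerSeries.C a * X) := by
    simp [expand_C]
  rw [hexpand, expand_inv q hq (by simp)]
  exact (tateMem_inv_one_add_C_mul_X ha).expand q hq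

theorem stmt18_general (p : ℕ) [Fact p.Prime] [IsUltrametricDist C] [CharP C p]
    (c : ℕ → C) (hc : ∀ m, 1 / (p : ℝ) ≤ ‖c m‖ ∧ ‖c m‖ < 1)
    (P : ℕ → C⟦X⟧)
    (hP : ∀ k, P k = ∏ m ∈ Finset.range k, (1 + PowerSeries.C (c m) * X ^ (p ^ m)))
    (e : C⟦X⟧)
    (he : ∀ k, ∃ T : C⟦X⟧, (∀ j, ¬ (p ^ k ∣ j) → PowerSeries.coeff j T = 0) ∧
      PowerSeries.constantCoeff T = 1 ∧ e = P k * T) :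
    ∀ n : ℕ, 1 ≤ n →
      TateMem (hderiv n e * e⁻¹) ∧
      ∀ k : ℕ, n < p ^ k →
        hderiv n e * P k = hderiv n (P k) * e ∧
        hderiv n e * e⁻¹ = hderiv n (P k) * (P k)⁻¹ := by
  have hq : ∀ m, p ^ m ≠ 0 := fun m => pow_ne_zero m (Fact.out : p.Prime).ne_zero
  have hP1 : ∀ k, constantCoeff (P k) = 1 := fun k => by
    simp [hP, map_prod, constantCoeff_one_add_C_mul_X_pow _ (hq _)]
  have he1 : constantCoeff e = 1 := by
    obtain ⟨T, -, hT1, he0⟩ := he 0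
    rw [he0, map_mul, hP1, hT1, one_mul]
  have hcross : ∀ n k, n < p ^ k → hderiv n e * P k = hderiv n (P k) * e := by
    intro n k hk
    obtain ⟨T, hT, -, hek⟩ := he k
    rw [hek, hderiv_mul_of_coeff_eq_zero hk _ _ hT]
    ring
  have hquot : ∀ n k, n < p ^ k → hderiv n e * e⁻¹ = hderiv n (P k) * (P k)⁻¹ :=
    fun n k hk =>
      mul_inv_eq_mul_inv_of_mul_eq_mul (by simp [he1]) (by simp [hP1]) (hcross n k hk)
  intro n _
  refine ⟨?_, fun k hk => ⟨hcross n k hk, hquot n k hk⟩⟩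
  rw [hquot n n (Nat.lt_pow_self (Fact.out : p.Prime).one_lt), hP n,
    inv_prod _ _ fun m _ => by simp [constantCoeff_one_add_C_mul_X_pow _ (hq m)]]
  exact ((tateMem_prod fun m _ => tateMem_one_add_C_mul_X_pow _ _).hderiv n).mul
    (tateMem_prod fun m _ => tateMem_inv_one_add_C_mul_X_pow (hc m).2 (hq m))

/-- (Example 4.1.) Let `C` be a complete non-archimedean algebraically closed field of
characteristic `p > 0`, and let `e = Π_{m≥0}(1 + c_m z^{p^m}) ∈ C[[z]]` with
`1/p ≤ |c_m| < 1` for all `m`; the infinite product is encoded by requiring that for every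
`k` one has `e = P_k · T_k`, where `P_k = Π_{m=0}^{k−1}(1 + c_m z^{p^m})` and `T_k` is a
power series in `z^{p^k}` with constant term `1`. Then for every `n ≥ 1` the coefficient
`a_n := ∂^{(n)}(e)/e` lies in the Tate algebra `C⟨z⟩`; in fact, for any `k` with `p^k > n`,
`∂^{(n)}(e)·P_k = ∂^{(n)}(P_k)·e` and `a_n = ∂^{(n)}(P_k)/P_k ∈ C⟨z⟩`. -/
theorem stmt18 (p : ℕ) [Fact p.Prime] [CompleteSpace C] [IsUltrametricDist C]
    [IsAlgClosed C] [CharP C p]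
    (c : ℕ → C) (hc : ∀ m, 1 / (p : ℝ) ≤ ‖c m‖ ∧ ‖c m‖ < 1)
    (P : ℕ → C⟦X⟧)
    (hP : ∀ k, P k = ∏ m ∈ Finset.range k, (1 + PowerSeries.C (c m) * X ^ (p ^ m)))
    (e : C⟦X⟧)
    (he : ∀ k, ∃ T : C⟦X⟧, (∀ j, ¬ (p ^ k ∣ j) → PowerSeries.coeff j T = 0) ∧
      PowerSeries.constantCoeff T = 1 ∧ e = P k * T) :
    ∀ n : ℕ, 1 ≤ n →
      TateMem (hderiv n e * e⁻¹) ∧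
      ∀ k : ℕ, n < p ^ k →
        hderiv n e * P k = hderiv n (P k) * e ∧
        hderiv n e * e⁻¹ = hderiv n (P k) * (P k)⁻¹ :=
  stmt18_general p c hc P hP e he
end
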